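/- arXiv:1904.09056 — 2 statements merged into one kernel-verified Lean document; each statement's English description precedes it below -/
import Mathlib

section
/- Let (Ω, F, (F_t)_{t≥0}, P) be a filtered probability space, M ≥ 1 an integer, and a ∈ (0,1). Let (Q(t))_{t≥0} be an adapted integer-valued process with Q(0) = 0 and Q(t+1) − Q(t) ∈ {0,1}, such that almost surely P(Q(t+1) = Q(t) + 1 | F_t) ≤ a^{Q(t)/M − 1} for every t ≥ 0. Then for every integer T ≥ 0: E[a^{−Q(T)/M}] ≤ a^{−1}·(a^{−1/M} − 1)·T + 1. -/
open MeasureTheory ProbabilityTheory Real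

/-! Write `X t = a^{-Q(t)/M}`. A jump of `Q` multiplies `X` by `a^{-1/M}`, so
`X (t+1) = X t + (a^{-1/M} - 1) X t 𝟙{jump at t}`. Conditioning on `ℱ t` and using the bound
on the jump probability, `E[X t 𝟙{jump at t}] ≤ E[a^{-Q(t)/M} a^{Q(t)/M - 1}] = a⁻¹`, so the
expectation of `X` grows by at most `a⁻¹ (a^{-1/M} - 1)` per step, starting from `X 0 = 1`. -/

theorem le_self_of_apply_succ_le {f : ℕ → ℕ} (h0 : f 0 = 0)
    (hsucc : ∀ t, f (t + 1) ≤ f t + 1) (t : ℕ) : f t ≤ t := by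
  induction t with
  | zero => simp [h0]
  | succ t ih => exact (hsucc t).trans (by omega)

theorem integral_mul_le_of_condExp_le {Ω : Type*} {m m0 : MeasurableSpace Ω} {μ : Measure Ω}
    (hm : m ≤ m0) [SigmaFinite (μ.trim hm)] {X Y g : Ω → ℝ} (hX : StronglyMeasurable[m] X)
    (hX0 : 0 ≤ᵐ[μ] X) (hY : Integrable Y μ) (hXY : Integrable (X * Y) μ)
    (hXg : Integrable (X * g) μ) (hYg : μ[Y|m] ≤ᵐ[μ] g) :
    ∫ ω, (X * Y) ω ∂μ ≤ ∫ ω, (X * g) ω ∂μ := by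
  have hpull : μ[X * Y|m] =ᵐ[μ] X * μ[Y|m] := condExp_mul_of_stronglyMeasurable_left hX hXY hY
  rw [← integral_condExp hm, integral_congr_ae hpull]
  refine integral_mono_ae (integrable_condExp.congr hpull) hXg ?_
  filter_upwards [hX0, hYg] with ω h0 hle
  exact mul_le_mul_of_nonneg_left hle h0

noncomputable def potential (a : ℝ) (M n : ℕ) : ℝ := a ^ (-((n : ℝ) / M))

section Potential

variable {a : ℝ} {M : ℕ}

@[simp]
theorem potential_zero : potential a M 0 = 1 := by simp [potential]

theorem potential_pos (ha : 0 < a) (n : ℕ) : 0 < potential a M n := rpow_pos_of_pos ha _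

theorem potential_succ (ha : 0 < a) (n : ℕ) :
    potential a M (n + 1) = potential a M n * a ^ (-(1 / (M : ℝ))) := by
  rw [potential, potential, ← rpow_add ha]
  congr 1
  push_cast
  ring

theorem potential_mul_rpow (ha : 0 < a) (n : ℕ) :
    potential a M n * a ^ ((n : ℝ) / M - 1) = a⁻¹ := by
  rw [potential, ← rpow_add ha, show -((n : ℝ) / M) + (n / M - 1) = -1 by ring, rpow_neg_one]

theorem potential_mono (ha0 : 0 < a) (ha1 : a ≤ 1) : Monotone (potential a M) := by
  intro n k hnk
  refine rpow_le_rpow_of_exponent_ge ha0 ha1 (neg_le_neg ?_)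
  gcongr

theorem one_le_rpow_neg_inv (ha0 : 0 < a) (ha1 : a ≤ 1) : 1 ≤ a ^ (-(1 / (M : ℝ))) := by
  simpa [potential] using potential_mono (M := M) ha0 ha1 (Nat.zero_le 1)

end Potential

def jump {Ω : Type*} (Q : ℕ → Ω → ℕ) (t : ℕ) (ω : Ω) : ℝ :=
  if Q (t + 1) ω = Q t ω + 1 then 1 else 0

section CountingProcess

variable {Ω : Type*} {m0 : MeasurableSpace Ω} {μ : Measure Ω} {Q : ℕ → Ω → ℕ} {a : ℝ}
  {M : ℕ}

theorem measurable_jump (hQ : ∀ t, Measurable (Q t)) (t : ℕ) : Measurable (jump Q t) :=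
  Measurable.ite (measurableSet_eq_fun (hQ (t + 1)) ((hQ t).add_const 1))
    measurable_const measurable_const

theorem norm_jump_le_one (t : ℕ) (ω : Ω) : ‖jump Q t ω‖ ≤ 1 := by
  unfold jump; split_ifs <;> simp

theorem potential_apply_succ (ha : 0 < a)
    (hstep : ∀ t ω, Q (t + 1) ω = Q t ω ∨ Q (t + 1) ω = Q t ω + 1) (t : ℕ) (ω : Ω) :
    potential a M (Q (t + 1) ω) = potential a M (Q t ω) +
      (a ^ (-(1 / (M : ℝ))) - 1) * (potential a M (Q t ω) * jump Q t ω) := by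
  rcases hstep t ω with h | h
  · simp [jump, h]
  · simp only [jump, h, if_true, potential_succ ha]
    ring

theorem integrable_potential_comp [IsFiniteMeasure μ] (ha0 : 0 < a) (ha1 : a ≤ 1)
    (hQ : ∀ t, Measurable (Q t)) (hQle : ∀ t ω, Q t ω ≤ t) (t : ℕ) :
    Integrable (fun ω => potential a M (Q t ω)) μ := by
  refine .of_bound ((measurable_from_top (f := potential a M)).comp (hQ t)).aestronglyMeasurable
    (potential a M t) ?_
  filter_upwards with ω
  rw [norm_of_nonneg (potential_pos ha0 _).le]
  exact potential_mono ha0 ha1 (hQle t ω)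

theorem integrable_potential_mul_jump [IsFiniteMeasure μ] (ha0 : 0 < a) (ha1 : a ≤ 1)
    (hQ : ∀ t, Measurable (Q t)) (hQle : ∀ t ω, Q t ω ≤ t) (t : ℕ) :
    Integrable (fun ω => potential a M (Q t ω) * jump Q t ω) μ :=
  (integrable_potential_comp ha0 ha1 hQ hQle t).mul_bdd
    (measurable_jump hQ t).aestronglyMeasurable (.of_forall (norm_jump_le_one t))

theorem integral_potential_mul_jump_le [IsProbabilityMeasure μ] {ℱ : Filtration ℕ m0}
    (ha0 : 0 < a) (ha1 : a ≤ 1) (hadapt : ∀ t, Measurable[ℱ t] (Q t)) (hQle : ∀ t ω, Q t ω ≤ t)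
    (t : ℕ)
    (hcond : ∀ᵐ ω ∂μ, (μ[jump Q t|ℱ t]) ω ≤ a ^ ((Q t ω : ℝ) / (M : ℝ) - 1)) :
    ∫ ω, potential a M (Q t ω) * jump Q t ω ∂μ ≤ a⁻¹ := by
  have hQ : ∀ t, Measurable (Q t) := fun t => (hadapt t).mono (ℱ.le t) le_rfl
  have hmeas : StronglyMeasurable[ℱ t] fun ω => potential a M (Q t ω) :=
    ((measurable_from_top (f := potential a M)).comp (hadapt t)).stronglyMeasurable
  have hjump : Integrable (jump Q t) μ :=
    .of_bound (measurable_jump hQ t).aestronglyMeasurable 1 (.of_forall (norm_jump_le_one t))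
  have hXg : (fun ω => potential a M (Q t ω)) * (fun ω => a ^ ((Q t ω : ℝ) / M - 1)) =
      fun _ => a⁻¹ := funext fun ω => potential_mul_rpow ha0 _
  have hle := integral_mul_le_of_condExp_le (ℱ.le t) hmeas
    (.of_forall fun ω => (potential_pos ha0 _).le) hjump
    (integrable_potential_mul_jump ha0 ha1 hQ hQle t)
    (hXg ▸ integrable_const a⁻¹) hcond
  rwa [hXg, integral_const, probReal_univ, one_smul] at hle

theorem integral_potential_succ_le [IsProbabilityMeasure μ] {ℱ : Filtration ℕ m0} (ha0 : 0 < a)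
    (ha1 : a ≤ 1) (hadapt : ∀ t, Measurable[ℱ t] (Q t)) (hQle : ∀ t ω, Q t ω ≤ t)
    (hstep : ∀ t ω, Q (t + 1) ω = Q t ω ∨ Q (t + 1) ω = Q t ω + 1) (t : ℕ)
    (hcond : ∀ᵐ ω ∂μ, (μ[jump Q t|ℱ t]) ω ≤ a ^ ((Q t ω : ℝ) / (M : ℝ) - 1)) :
    ∫ ω, potential a M (Q (t + 1) ω) ∂μ ≤
      ∫ ω, potential a M (Q t ω) ∂μ + a⁻¹ * (a ^ (-(1 / (M : ℝ))) - 1) := by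
  have hQ : ∀ t, Measurable (Q t) := fun t => (hadapt t).mono (ℱ.le t) le_rfl
  calc ∫ ω, potential a M (Q (t + 1) ω) ∂μ
      = ∫ ω, potential a M (Q t ω) ∂μ +
          (a ^ (-(1 / (M : ℝ))) - 1) * ∫ ω, potential a M (Q t ω) * jump Q t ω ∂μ := by
        simp_rw [potential_apply_succ ha0 hstep t]
        rw [integral_add (integrable_potential_comp ha0 ha1 hQ hQle t)
          ((integrable_potential_mul_jump ha0 ha1 hQ hQle t).const_mul _), integral_const_mul]
    _ ≤ ∫ ω, potential a M (Q t ω) ∂μ + (a ^ (-(1 / (M : ℝ))) - 1) * a⁻¹ := by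
        gcongr
        · exact sub_nonneg.mpr (one_le_rpow_neg_inv ha0 ha1)
        · exact integral_potential_mul_jump_le ha0 ha1 hadapt hQle t hcond
    _ = _ := by ring

end CountingProcess

theorem statement9_general {Ω : Type*} {m0 : MeasurableSpace Ω} (μ : Measure Ω)
    [IsProbabilityMeasure μ] (ℱ : Filtration ℕ m0)
    (M : ℕ) (a : ℝ) (ha0 : 0 < a) (ha1 : a < 1)
    (Q : ℕ → Ω → ℕ) (hadapt : ∀ t, Measurable[ℱ t] (Q t))
    (hQ0 : ∀ ω, Q 0 ω = 0)
    (hstep : ∀ t ω, Q (t + 1) ω = Q t ω ∨ Q (t + 1) ω = Q t ω + 1)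
    (hcond : ∀ t, ∀ᵐ ω ∂μ,
      (μ[(fun ω' => if Q (t + 1) ω' = Q t ω' + 1 then (1 : ℝ) else 0)|ℱ t]) ω ≤
        a ^ ((Q t ω : ℝ) / (M : ℝ) - 1)) :
    ∀ T : ℕ, ∫ ω, a ^ (-((Q T ω : ℝ) / (M : ℝ))) ∂μ ≤
      a⁻¹ * (a ^ (-(1 / (M : ℝ))) - 1) * (T : ℝ) + 1 := by
  have hQle : ∀ t ω, Q t ω ≤ t := fun t ω =>
    le_self_of_apply_succ_le (f := (Q · ω)) (hQ0 ω)
      (fun s => by rcases hstep s ω with h | h <;> omega) t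
  intro T
  show ∫ ω, potential a M (Q T ω) ∂μ ≤ _
  induction T with
  | zero => simp [hQ0]
  | succ T ih =>
    calc ∫ ω, potential a M (Q (T + 1) ω) ∂μ
        ≤ ∫ ω, potential a M (Q T ω) ∂μ + a⁻¹ * (a ^ (-(1 / (M : ℝ))) - 1) :=
          integral_potential_succ_le ha0 ha1.le hadapt hQle hstep T (hcond T)
      _ ≤ _ := by push_cast; linarith

/-- If `(Q(t))` is an adapted counting process with `Q(0) = 0`, increments in `{0,1}`, and
`P(Q(t+1) = Q(t)+1 | F_t) ≤ a^{Q(t)/M − 1}` a.s. for every `t`, then for every `T ≥ 0`: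
`E[a^{−Q(T)/M}] ≤ a⁻¹(a^{−1/M} − 1) T + 1`. -/
theorem statement9 {Ω : Type*} {m0 : MeasurableSpace Ω} (μ : Measure Ω)
    [IsProbabilityMeasure μ] (ℱ : Filtration ℕ m0)
    (M : ℕ) (hM : 1 ≤ M) (a : ℝ) (ha0 : 0 < a) (ha1 : a < 1)
    (Q : ℕ → Ω → ℕ) (hadapt : ∀ t, Measurable[ℱ t] (Q t))
    (hQ0 : ∀ ω, Q 0 ω = 0)
    (hstep : ∀ t ω, Q (t + 1) ω = Q t ω ∨ Q (t + 1) ω = Q t ω + 1)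
    (hcond : ∀ t, ∀ᵐ ω ∂μ,
      (μ[(fun ω' => if Q (t + 1) ω' = Q t ω' + 1 then (1 : ℝ) else 0)|ℱ t]) ω ≤
        a ^ ((Q t ω : ℝ) / (M : ℝ) - 1)) :
    ∀ T : ℕ, ∫ ω, a ^ (-((Q T ω : ℝ) / (M : ℝ))) ∂μ ≤
      a⁻¹ * (a ^ (-(1 / (M : ℝ))) - 1) * (T : ℝ) + 1 :=
  statement9_general μ ℱ M a ha0 ha1 Q hadapt hQ0 hstep hcond
end

section
/- Let (Ω, F, (F_t)_{t≥0}, P) be a filtered probability space, M ≥ 1 an integer, and a ∈ (0,1). Let (Q(t))_{t≥0} be an adapted integer-valued process with Q(0) = 0 and Q(t+1) − Q(t) ∈ {0,1}, such that almost surely P(Q(t+1) = Q(t) + 1 | F_t) ≤ a^{Q(t)/M − 1} for every t ≥ 0. Then for every integer T ≥ 0, the expected count satisfies E[Q(T)] ≤ M · ln(a^{−1}·(a^{−1/M} − 1)·T + 1) / ln(1/a). -/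
open MeasureTheory ProbabilityTheory Real

/-!
With `b = a^{-1/M}` the hazard bound says `b^{Q t} · P(jump at t | F_t) ≤ a⁻¹`. Since
`b^{Q (t+1)} - b^{Q t} = (b - 1) b^{Q t} 1{jump at t}`, each step raises `E[b^{Q t}]` by at
most `(b - 1) a⁻¹`, so `E[b^{Q T}] ≤ (b - 1) a⁻¹ T + 1`. Jensen's inequality for the concave
logarithm turns this into `log b · E[Q T] ≤ log ((b - 1) a⁻¹ T + 1)`, and
`log b = log (1/a) / M`.
-/

structure IsCountingProcess {Ω : Type*} (Q : ℕ → Ω → ℕ) : Prop where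
  zero : ∀ ω, Q 0 ω = 0
  step : ∀ t ω, Q (t + 1) ω = Q t ω ∨ Q (t + 1) ω = Q t ω + 1

def jumpIndicator {Ω : Type*} (Q : ℕ → Ω → ℕ) (t : ℕ) (ω : Ω) : ℝ :=
  if Q (t + 1) ω = Q t ω + 1 then 1 else 0

namespace IsCountingProcess

variable {Ω : Type*} {Q : ℕ → Ω → ℕ}

lemma le_self (hQ : IsCountingProcess Q) (t : ℕ) (ω : Ω) : Q t ω ≤ t := by
  induction t with
  | zero => simp [hQ.zero ω]
  | succ t ih => rcases hQ.step t ω with h | h <;> omega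

lemma pow_succ_eq (hQ : IsCountingProcess Q) (b : ℝ) (t : ℕ) (ω : Ω) :
    b ^ Q (t + 1) ω = b ^ Q t ω + (b - 1) * (b ^ Q t ω * jumpIndicator Q t ω) := by
  rcases hQ.step t ω with h | h
  · rw [jumpIndicator, h, if_neg (by omega)]
    ring
  · rw [jumpIndicator, h, if_pos rfl, pow_succ]
    ring

lemma norm_comp_le (hQ : IsCountingProcess Q) (f : ℕ → ℝ) (t : ℕ) (ω : Ω) :
    ‖f (Q t ω)‖ ≤ ∑ k ∈ Finset.range (t + 1), |f k| :=
  Finset.single_le_sum (f := fun k => |f k|) (fun _ _ => abs_nonneg _)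
    (Finset.mem_range_succ_iff.mpr (hQ.le_self t ω))

variable {m0 : MeasurableSpace Ω} {μ : Measure Ω}

lemma integrable_comp [IsFiniteMeasure μ] (hQ : IsCountingProcess Q) {t : ℕ}
    (hmeas : Measurable (Q t)) (f : ℕ → ℝ) : Integrable (fun ω => f (Q t ω)) μ :=
  (integrable_const (∑ k ∈ Finset.range (t + 1), |f k|)).mono'
    (measurable_from_top.comp hmeas).aestronglyMeasurable (ae_of_all _ (hQ.norm_comp_le f t))

lemma integrable_jumpIndicator [IsFiniteMeasure μ] (hmeas : ∀ t, Measurable (Q t)) (t : ℕ) :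
    Integrable (jumpIndicator Q t) μ := by
  have hm : Measurable (jumpIndicator Q t) :=
    Measurable.ite (measurableSet_eq_fun (hmeas (t + 1)) ((hmeas t).add measurable_const))
      measurable_const measurable_const
  refine (integrable_const (1 : ℝ)).mono' hm.aestronglyMeasurable (ae_of_all _ fun ω => ?_)
  unfold jumpIndicator
  split_ifs <;> simp

lemma integrable_comp_mul_jumpIndicator [IsFiniteMeasure μ] (hQ : IsCountingProcess Q)
    (hmeas : ∀ t, Measurable (Q t)) (f : ℕ → ℝ) (t : ℕ) :
    Integrable (fun ω => f (Q t ω) * jumpIndicator Q t ω) μ :=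
  (integrable_jumpIndicator hmeas t).bdd_mul
    (measurable_from_top.comp (hmeas t)).aestronglyMeasurable
    (ae_of_all _ (hQ.norm_comp_le f t))

variable [IsProbabilityMeasure μ] {ℱ : Filtration ℕ m0}

lemma integral_pow_mul_jumpIndicator_le (hQ : IsCountingProcess Q)
    (hadapt : ∀ t, Measurable[ℱ t] (Q t)) {b c : ℝ} {t : ℕ}
    (hhazard : ∀ᵐ ω ∂μ, b ^ Q t ω * μ[jumpIndicator Q t|ℱ t] ω ≤ c) :
    ∫ ω, b ^ Q t ω * jumpIndicator Q t ω ∂μ ≤ c := by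
  have hmeas : ∀ t, Measurable (Q t) := fun t => (hadapt t).mono (ℱ.le t) le_rfl
  have hpow_sm : StronglyMeasurable[ℱ t] (fun ω => b ^ Q t ω) :=
    (measurable_from_top.comp (hadapt t)).stronglyMeasurable
  have hprod : Integrable ((fun ω => b ^ Q t ω) * jumpIndicator Q t) μ :=
    hQ.integrable_comp_mul_jumpIndicator hmeas (b ^ ·) t
  calc ∫ ω, b ^ Q t ω * jumpIndicator Q t ω ∂μ
      = ∫ ω, μ[(fun ω => b ^ Q t ω) * jumpIndicator Q t|ℱ t] ω ∂μ :=
        (integral_condExp (ℱ.le t)).symm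
    _ = ∫ ω, b ^ Q t ω * μ[jumpIndicator Q t|ℱ t] ω ∂μ :=
        integral_congr_ae <| condExp_mul_of_stronglyMeasurable_left hpow_sm hprod
          (integrable_jumpIndicator hmeas t)
    _ ≤ ∫ _, c ∂μ :=
        integral_mono_ae (integrable_condExp.bdd_mul
          (measurable_from_top.comp (hmeas t)).aestronglyMeasurable
          (ae_of_all _ (hQ.norm_comp_le (b ^ ·) t))) (integrable_const c) hhazard
    _ = c := by simp

lemma integral_pow_le (hQ : IsCountingProcess Q) (hadapt : ∀ t, Measurable[ℱ t] (Q t))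
    {b c : ℝ} (hb : 1 ≤ b)
    (hhazard : ∀ t, ∀ᵐ ω ∂μ, b ^ Q t ω * μ[jumpIndicator Q t|ℱ t] ω ≤ c)
    (T : ℕ) :
    ∫ ω, b ^ Q T ω ∂μ ≤ (b - 1) * c * T + 1 := by
  have hmeas : ∀ t, Measurable (Q t) := fun t => (hadapt t).mono (ℱ.le t) le_rfl
  induction T with
  | zero => simp [hQ.zero]
  | succ T ih =>
    calc ∫ ω, b ^ Q (T + 1) ω ∂μ
        = ∫ ω, b ^ Q T ω ∂μ + (b - 1) * ∫ ω, b ^ Q T ω * jumpIndicator Q T ω ∂μ := by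
          simp_rw [hQ.pow_succ_eq b T]
          rw [integral_add (hQ.integrable_comp (hmeas T) _)
            ((hQ.integrable_comp_mul_jumpIndicator hmeas (b ^ ·) T).const_mul _),
            integral_const_mul]
      _ ≤ ((b - 1) * c * T + 1) + (b - 1) * c :=
          add_le_add ih (mul_le_mul_of_nonneg_left
            (hQ.integral_pow_mul_jumpIndicator_le hadapt (hhazard T)) (by linarith))
      _ = (b - 1) * c * (T + 1 : ℕ) + 1 := by
          push_cast
          ring

theorem integral_le_log_div_log (hQ : IsCountingProcess Q)
    (hadapt : ∀ t, Measurable[ℱ t] (Q t)) {b c : ℝ} (hb : 1 < b)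
    (hhazard : ∀ t, ∀ᵐ ω ∂μ, b ^ Q t ω * μ[jumpIndicator Q t|ℱ t] ω ≤ c)
    (T : ℕ) :
    ∫ ω, (Q T ω : ℝ) ∂μ ≤ log ((b - 1) * c * T + 1) / log b := by
  have hmeas : Measurable (Q T) := (hadapt T).mono (ℱ.le T) le_rfl
  have hlogb : 0 < log b := log_pos hb
  have hjensen : ∫ ω, log (b ^ Q T ω) ∂μ ≤ log (∫ ω, b ^ Q T ω ∂μ) :=
    ConcaveOn.le_map_integral
      (strictConcaveOn_log_Ioi.concaveOn.subset (fun x hx => lt_of_lt_of_le one_pos hx)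
        (convex_Ici 1))
      (continuousOn_log.mono fun x hx => (lt_of_lt_of_le one_pos hx).ne')
      isClosed_Ici (ae_of_all _ fun ω => one_le_pow₀ hb.le)
      (hQ.integrable_comp hmeas _) (hQ.integrable_comp hmeas (fun n => log (b ^ n)))
  have hmoment_pos : 0 < ∫ ω, b ^ Q T ω ∂μ :=
    lt_of_lt_of_le one_pos <| by
      simpa using integral_mono (integrable_const (μ := μ) 1) (hQ.integrable_comp hmeas (b ^ ·))
        fun ω => one_le_pow₀ hb.le
  rw [le_div_iff₀ hlogb, ← integral_mul_const]
  calc ∫ ω, (Q T ω : ℝ) * log b ∂μ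
      = ∫ ω, log (b ^ Q T ω) ∂μ := by simp_rw [log_pow]
    _ ≤ log (∫ ω, b ^ Q T ω ∂μ) := hjensen
    _ ≤ log ((b - 1) * c * T + 1) :=
        log_le_log hmoment_pos (hQ.integral_pow_le hadapt hb.le hhazard T)

end IsCountingProcess

/-- If `(Q(t))` is an adapted counting process with `Q(0) = 0`, increments in `{0,1}`, and
`P(Q(t+1) = Q(t)+1 | F_t) ≤ a^{Q(t)/M − 1}` a.s. for every `t`, then for every `T ≥ 0`:
`E[Q(T)] ≤ M · ln(a⁻¹(a^{−1/M} − 1) T + 1) / ln(1/a)`. -/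
theorem statement10 {Ω : Type*} {m0 : MeasurableSpace Ω} (μ : Measure Ω)
    [IsProbabilityMeasure μ] (ℱ : Filtration ℕ m0)
    (M : ℕ) (hM : 1 ≤ M) (a : ℝ) (ha0 : 0 < a) (ha1 : a < 1)
    (Q : ℕ → Ω → ℕ) (hadapt : ∀ t, Measurable[ℱ t] (Q t))
    (hQ0 : ∀ ω, Q 0 ω = 0)
    (hstep : ∀ t ω, Q (t + 1) ω = Q t ω ∨ Q (t + 1) ω = Q t ω + 1)
    (hcond : ∀ t, ∀ᵐ ω ∂μ,
      (μ[(fun ω' => if Q (t + 1) ω' = Q t ω' + 1 then (1 : ℝ) else 0)|ℱ t]) ω ≤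
        a ^ ((Q t ω : ℝ) / (M : ℝ) - 1)) :
    ∀ T : ℕ, ∫ ω, (Q T ω : ℝ) ∂μ ≤
      (M : ℝ) * Real.log (a⁻¹ * (a ^ (-(1 / (M : ℝ))) - 1) * (T : ℝ) + 1) /
        Real.log (1 / a) := by
  intro T
  set b : ℝ := a ^ (-(1 / (M : ℝ)))
  have hM' : (0 : ℝ) < M := by exact_mod_cast hM
  have hb : 1 < b := one_lt_rpow_of_pos_of_lt_one_of_neg ha0 ha1 (by simp [hM'])
  have hlogb : log b = log (1 / a) / M := by
    rw [log_rpow ha0, one_div a, log_inv]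
    ring
  have hhazard : ∀ t, ∀ᵐ ω ∂μ, b ^ Q t ω * μ[jumpIndicator Q t|ℱ t] ω ≤ a⁻¹ := fun t => by
    filter_upwards [hcond t] with ω hω
    calc b ^ Q t ω * μ[jumpIndicator Q t|ℱ t] ω
        ≤ b ^ Q t ω * a ^ ((Q t ω : ℝ) / M - 1) :=
          mul_le_mul_of_nonneg_left hω (pow_nonneg (by linarith) _)
      _ = a⁻¹ := by
          rw [← rpow_natCast, ← rpow_mul ha0.le, ← rpow_add ha0, ← rpow_neg_one]
          congr 1
          field_simp
          ring
  have hbound := (IsCountingProcess.mk hQ0 hstep).integral_le_log_div_log hadapt hb hhazard T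
  rwa [hlogb, div_div_eq_mul_div, mul_comm (b - 1), mul_comm (log _)] at hbound
end
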